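/- For every real ρ ≥ −1, the minimum over pairs (T,V) with supp(V) ⊆ supp(Q) of { D(T∘V‖Q∘P) + ρ·D(T∘V‖T×Q) } equals E₀(ρ,Q); moreover E₀(−1,Q) = lim_{ρ ↘ −1} E₀(ρ,Q) = −log ∑_y max_{x : Q(x)>0} P(y|x). If ρ > −1, the unique minimizer is the joint distribution T_ρ∘V_ρ; if ρ = −1, the minimizers are exactly the joint distributions T_{−1}∘V with V admissible at −1. -/

import Mathlib

/-!
Writing `F_ρ(T∘V) = ∑_y T(y) (log T(y) + c_y(V(·|y)))`, the minimization splits into two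
Gibbs inequalities. For `ρ > -1`, `c_y(v) = (1+ρ) ∑_x v(x) log (v(x) / (Q(x) P(y|x)^{1/(1+ρ)}))`
is at least `-log A_ρ(y)^{1+ρ}`, where `A_ρ(y) = ∑_x Q(x) P(y|x)^{1/(1+ρ)}`, with equality only
at `V_ρ(·|y)`. For `ρ = -1`, `c_y(v) = -∑_x v(x) log P(y|x)` is at least `-log max_{Q(x)>0} P(y|x)`,
with equality iff `v` lives on the argmax. With `w(y)` equal to `A_ρ(y)^{1+ρ}`, resp. that
maximum, what remains is `∑_y T(y) log (T(y) / w(y)) ≥ -log ∑_y w(y)`, with equality only at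
`T ∝ w`. The limit `ρ ↘ -1` is the convergence of the power means `(∑_x Q(x) p(x)^s)^{1/s}` to
`max_{Q(x)>0} p(x)` as `s → ∞`.
-/

open scoped BigOperators
open Filter Topology

/-- `f` is a probability mass function on a finite alphabet. -/
def IsPMF {α : Type*} [Fintype α] (f : α → ℝ) : Prop :=
  (∀ a, 0 ≤ f a) ∧ ∑ a, f a = 1

/-- `P` is a discrete memoryless channel from `𝓧` to `𝓨`. -/
def IsChannel {𝓧 𝓨 : Type*} [Fintype 𝓧] [Fintype 𝓨] (P : 𝓧 → 𝓨 → ℝ) : Prop :=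
  ∀ x, IsPMF (P x)

/-- `V` is a conditional pmf on `𝓧` given `𝓨`. -/
def IsCondPMF {𝓧 𝓨 : Type*} [Fintype 𝓧] [Fintype 𝓨] (V : 𝓨 → 𝓧 → ℝ) : Prop :=
  ∀ y, IsPMF (V y)

/-- one term `s·log(s/t)` of a KL divergence, with the conventions
    `0·log(0/t) = 0` and `s·log(s/0) = +∞` for `s > 0`. -/
noncomputable def klTerm (s t : ℝ) : EReal :=
  if s = 0 then 0 else if t = 0 then ⊤ else ((s * Real.log (s / t) : ℝ) : EReal)

/-- `D(T∘V ‖ Q∘P)`. -/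
noncomputable def DQP {𝓧 𝓨 : Type*} [Fintype 𝓧] [Fintype 𝓨]
    (T : 𝓨 → ℝ) (V : 𝓨 → 𝓧 → ℝ) (Q : 𝓧 → ℝ) (P : 𝓧 → 𝓨 → ℝ) : EReal :=
  ∑ y, ∑ x, klTerm (T y * V y x) (Q x * P x y)

/-- `D(T∘V ‖ T×Q)`. -/
noncomputable def DTQ {𝓧 𝓨 : Type*} [Fintype 𝓧] [Fintype 𝓨]
    (T : 𝓨 → ℝ) (V : 𝓨 → 𝓧 → ℝ) (Q : 𝓧 → ℝ) : EReal :=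
  ∑ y, ∑ x, klTerm (T y * V y x) (T y * Q x)

/-- Gallager's function `E₀(ρ,Q)` (for `ρ > −1`). -/
noncomputable def E0 {𝓧 𝓨 : Type*} [Fintype 𝓧] [Fintype 𝓨]
    (ρ : ℝ) (Q : 𝓧 → ℝ) (P : 𝓧 → 𝓨 → ℝ) : ℝ :=
  - Real.log (∑ y, (∑ x, Q x * P x y ^ (1 / (1 + ρ))) ^ (1 + ρ))

/-- The joint distribution `T_ρ∘V_ρ` on `𝓧 × 𝓨` (for `ρ > −1`). -/
noncomputable def Jrho {𝓧 𝓨 : Type*} [Fintype 𝓧] [Fintype 𝓨]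
    (ρ : ℝ) (Q : 𝓧 → ℝ) (P : 𝓧 → 𝓨 → ℝ) (x : 𝓧) (y : 𝓨) : ℝ :=
  Q x * P x y ^ (1 / (1 + ρ)) * (∑ a, Q a * P a y ^ (1 / (1 + ρ))) ^ ρ /
    ∑ y', (∑ a, Q a * P a y' ^ (1 / (1 + ρ))) ^ (1 + ρ)

/-- `max_{x : Q(x) > 0} P(y|x)`. -/
noncomputable def maxP {𝓧 𝓨 : Type*} (Q : 𝓧 → ℝ) (P : 𝓧 → 𝓨 → ℝ) (y : 𝓨) : ℝ :=
  ⨆ x : {x // 0 < Q x}, P x.1 y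

/-- `E₀(−1,Q) = −log ∑_y max_{x : Q(x)>0} P(y|x)`. -/
noncomputable def E0m1 {𝓧 𝓨 : Type*} [Fintype 𝓧] [Fintype 𝓨]
    (Q : 𝓧 → ℝ) (P : 𝓧 → 𝓨 → ℝ) : ℝ :=
  - Real.log (∑ y, maxP Q P y)

/-- `E₀(ρ,Q)` extended to `ρ = −1`. -/
noncomputable def E0full {𝓧 𝓨 : Type*} [Fintype 𝓧] [Fintype 𝓨]
    (ρ : ℝ) (Q : 𝓧 → ℝ) (P : 𝓧 → 𝓨 → ℝ) : ℝ :=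
  if ρ = -1 then E0m1 Q P else E0 ρ Q P

/-- `T_{−1}(y) ∝ max_{a : Q(a)>0} P(y|a)`. -/
noncomputable def Tm1 {𝓧 𝓨 : Type*} [Fintype 𝓧] [Fintype 𝓨]
    (Q : 𝓧 → ℝ) (P : 𝓧 → 𝓨 → ℝ) (y : 𝓨) : ℝ :=
  maxP Q P y / ∑ y', maxP Q P y'

/-- `V` is admissible at `ρ = −1`: `V(x|y) = 0` for every `x` outside
    `argmax_{a : Q(a)>0} P(y|a)`. -/
def AdmissibleAtM1 {𝓧 𝓨 : Type*} [Fintype 𝓧] [Fintype 𝓨]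
    (Q : 𝓧 → ℝ) (P : 𝓧 → 𝓨 → ℝ) (V : 𝓨 → 𝓧 → ℝ) : Prop :=
  ∀ y x, ¬ (0 < Q x ∧ ∀ a, 0 < Q a → P a y ≤ P x y) → V y x = 0

/-- the error exponent `E_e(R,Q)`. -/
noncomputable def Ee {𝓧 𝓨 : Type*} [Fintype 𝓧] [Fintype 𝓨]
    (R : ℝ) (Q : 𝓧 → ℝ) (P : 𝓧 → 𝓨 → ℝ) : EReal :=
  sInf {v | ∃ T : 𝓨 → ℝ, ∃ V : 𝓨 → 𝓧 → ℝ, IsPMF T ∧ IsCondPMF V ∧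
    v = DQP T V Q P + max (DTQ T V Q - (R : EReal)) 0}

/-- the ML correct-decoding exponent `E_c^{ML}(R,Q)`. -/
noncomputable def EcML {𝓧 𝓨 : Type*} [Fintype 𝓧] [Fintype 𝓨]
    (R : ℝ) (Q : 𝓧 → ℝ) (P : 𝓧 → 𝓨 → ℝ) : EReal :=
  sInf {v | ∃ T : 𝓨 → ℝ, ∃ V : 𝓨 → 𝓧 → ℝ, IsPMF T ∧ IsCondPMF V ∧
    v = DQP T V Q P + max ((R : EReal) - DTQ T V Q) 0}

/-- the strict correct-decoding exponent `E_c(R,Q)` (`+∞` if infeasible). -/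
noncomputable def Ec {𝓧 𝓨 : Type*} [Fintype 𝓧] [Fintype 𝓨]
    (R : ℝ) (Q : 𝓧 → ℝ) (P : 𝓧 → 𝓨 → ℝ) : EReal :=
  sInf {v | ∃ T : 𝓨 → ℝ, ∃ V : 𝓨 → 𝓧 → ℝ, IsPMF T ∧ IsCondPMF V ∧
    (R : EReal) ≤ DTQ T V Q ∧ v = DQP T V Q P}

/-- the mutual information `I(Q∘P)`. -/
noncomputable def MI {𝓧 𝓨 : Type*} [Fintype 𝓧] [Fintype 𝓨]
    (Q : 𝓧 → ℝ) (P : 𝓧 → 𝓨 → ℝ) : ℝ :=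
  ∑ x, ∑ y, if Q x * P x y = 0 then 0
    else Q x * P x y * Real.log (P x y / ∑ a, Q a * P a y)

/-- the capacity `C(Z)` of the channel restricted to input letters in `Z`. -/
noncomputable def capacity {𝓧 𝓨 : Type*} [Fintype 𝓧] [Fintype 𝓨]
    (P : 𝓧 → 𝓨 → ℝ) (Z : Set 𝓧) : ℝ :=
  sSup {c | ∃ Q' : 𝓧 → ℝ, IsPMF Q' ∧ (∀ x, 0 < Q' x → x ∈ Z) ∧ c = MI Q' P}

/-- `R_{−1}^{−}(Q)`. -/
noncomputable def Rm1minus {𝓧 𝓨 : Type*} [Fintype 𝓧] [Fintype 𝓨]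
    (Q : 𝓧 → ℝ) (P : 𝓧 → 𝓨 → ℝ) : EReal :=
  sInf {v | ∃ V : 𝓨 → 𝓧 → ℝ, IsCondPMF V ∧ AdmissibleAtM1 Q P V ∧
    v = DTQ (Tm1 Q P) V Q}

/-- `R_{−1}^{+}(Q)`. -/
noncomputable def Rm1plus {𝓧 𝓨 : Type*} [Fintype 𝓧] [Fintype 𝓨]
    (Q : 𝓧 → ℝ) (P : 𝓧 → 𝓨 → ℝ) : EReal :=
  sSup {v | ∃ V : 𝓨 → 𝓧 → ℝ, IsCondPMF V ∧ AdmissibleAtM1 Q P V ∧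
    v = DTQ (Tm1 Q P) V Q}

/-- `F_ρ(T∘V, Q) = D(T∘V‖Q∘P) + ρ·D(T∘V‖T×Q)`. -/
noncomputable def Frho {𝓧 𝓨 : Type*} [Fintype 𝓧] [Fintype 𝓨]
    (ρ : ℝ) (T : 𝓨 → ℝ) (V : 𝓨 → 𝓧 → ℝ) (Q : 𝓧 → ℝ) (P : 𝓧 → 𝓨 → ℝ) : EReal :=
  DQP T V Q P + (ρ : EReal) * DTQ T V Q

/-- the unconstrained penalized minimum
    `min_{T,V} { D(T∘V‖Q∘P) + ρ·(D(T∘V‖T×Q) − R) }`. -/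
noncomputable def penMin {𝓧 𝓨 : Type*} [Fintype 𝓧] [Fintype 𝓨]
    (Q : 𝓧 → ℝ) (P : 𝓧 → 𝓨 → ℝ) (R ρ : ℝ) : EReal :=
  sInf {v | ∃ T : 𝓨 → ℝ, ∃ V : 𝓨 → 𝓧 → ℝ, IsPMF T ∧ IsCondPMF V ∧
    v = DQP T V Q P + (ρ : EReal) * (DTQ T V Q - (R : EReal))}

/-- the support-constrained penalized minimum
    `min_{T,V : supp(V) ⊆ supp(Q)} { D(T∘V‖Q∘P) − ρ·(R − D(T∘V‖T×Q)) }`. -/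
noncomputable def penMinS {𝓧 𝓨 : Type*} [Fintype 𝓧] [Fintype 𝓨]
    (Q : 𝓧 → ℝ) (P : 𝓧 → 𝓨 → ℝ) (R ρ : ℝ) : EReal :=
  sInf {v | ∃ T : 𝓨 → ℝ, ∃ V : 𝓨 → 𝓧 → ℝ, IsPMF T ∧ IsCondPMF V ∧
    (∀ y x, Q x = 0 → V y x = 0) ∧
    v = DQP T V Q P - (ρ : EReal) * ((R : EReal) - DTQ T V Q)}


open Real Finset

namespace EReal

lemma coe_finset_sum {ι : Type*} (s : Finset ι) (f : ι → ℝ) :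
    ((∑ i ∈ s, f i : ℝ) : EReal) = ∑ i ∈ s, (f i : EReal) :=
  map_sum (⟨⟨Real.toEReal, coe_zero⟩, coe_add⟩ : ℝ →+ EReal) f s

lemma finset_sum_ne_bot {ι : Type*} {s : Finset ι} {f : ι → EReal}
    (hf : ∀ i ∈ s, f i ≠ ⊥) : ∑ i ∈ s, f i ≠ ⊥ :=
  Finset.sum_induction f (· ≠ ⊥) (fun _ _ ha hb ↦ add_ne_bot_iff.2 ⟨ha, hb⟩) (by simp) hf

lemma finset_sum_eq_top {ι : Type*} [DecidableEq ι] {s : Finset ι} {f : ι → EReal}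
    (hf : ∀ i ∈ s, f i ≠ ⊥) {i : ι} (hi : i ∈ s) (htop : f i = ⊤) : ∑ j ∈ s, f j = ⊤ := by
  rw [← add_sum_erase s f hi, htop]
  exact top_add_of_ne_bot (finset_sum_ne_bot fun j hj ↦ hf j (mem_of_mem_erase hj))

end EReal

section Gibbs

variable {ι : Type*} [Fintype ι]

lemma IsPMF.exists_pos {f : ι → ℝ} (hf : IsPMF f) : ∃ i, 0 < f i := by
  by_contra! h
  have : ∑ i, f i = 0 := sum_eq_zero fun i _ ↦ le_antisymm (h i) (hf.1 i)
  simp [hf.2] at this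

lemma mul_log_div_sub_add_nonneg_and_eq_zero_iff {c b : ℝ} (hc : 0 ≤ c) (hb : 0 ≤ b)
    (hcb : c ≠ 0 → b ≠ 0) :
    0 ≤ c * log (c / b) - c + b ∧ (c * log (c / b) - c + b = 0 ↔ c = b) := by
  rcases hb.eq_or_lt with rfl | hb
  · obtain rfl : c = 0 := by tauto
    simp
  have key : c * log (c / b) - c + b = b * InformationTheory.klFun (c / b) := by
    rw [InformationTheory.klFun_apply]
    field_simp
    ring
  rw [key, mul_eq_zero, InformationTheory.klFun_eq_zero_iff (by positivity),
    div_eq_one_iff_eq hb.ne']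
  exact ⟨mul_nonneg hb.le (InformationTheory.klFun_nonneg (by positivity)), by simp [hb.ne']⟩

lemma neg_log_sum_le_sum_mul_log_div_and_eq_iff {c b : ι → ℝ} (hc : IsPMF c)
    (hb : ∀ i, 0 ≤ b i) (hcb : ∀ i, c i ≠ 0 → b i ≠ 0) :
    0 < ∑ i, b i ∧ -log (∑ i, b i) ≤ ∑ i, c i * log (c i / b i) ∧
      (∑ i, c i * log (c i / b i) = -log (∑ i, b i) ↔ ∀ i, c i = b i / ∑ j, b j) := by
  set B := ∑ i, b i
  have hB : 0 < B := by
    obtain ⟨i, hi⟩ := hc.exists_pos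
    exact (hb i).lt_of_ne' (hcb i hi.ne') |>.trans_le
      (single_le_sum (fun j _ ↦ hb j) (mem_univ i))
  set b' : ι → ℝ := fun i ↦ b i / B
  have hterm i := mul_log_div_sub_add_nonneg_and_eq_zero_iff (hc.1 i)
    (div_nonneg (hb i) hB.le) (fun h ↦ div_ne_zero (hcb i h) hB.ne')
  have hsum : ∑ i, c i * log (c i / b i) + log B
      = ∑ i, (c i * log (c i / b' i) - c i + b' i) := by
    have hb'1 : ∑ i, b' i = 1 := by rw [← sum_div, div_self hB.ne']
    have hlog i : c i * log (c i / b' i) = c i * log (c i / b i) + c i * log B := by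
      rcases eq_or_ne (c i) 0 with h | h
      · simp [h]
      rw [div_div_eq_mul_div, log_div (mul_ne_zero h hB.ne') (hcb i h),
        log_div h (hcb i h), log_mul h hB.ne']
      ring
    simp only [sum_add_distrib, sum_sub_distrib, hlog, ← sum_mul, hc.2, hb'1]
    ring
  have hnonneg : 0 ≤ ∑ i, (c i * log (c i / b' i) - c i + b' i) :=
    sum_nonneg fun i _ ↦ (hterm i).1
  refine ⟨hB, by linarith, ?_⟩
  calc ∑ i, c i * log (c i / b i) = -log B
      ↔ ∑ i, (c i * log (c i / b' i) - c i + b' i) = 0 := by constructor <;> intro <;> linarith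
    _ ↔ ∀ i, c i = b' i := by
      rw [sum_eq_zero_iff_of_nonneg fun i _ ↦ (hterm i).1]
      exact forall_congr' fun i ↦ by simp only [mem_univ, true_implies, (hterm i).2, b']

lemma neg_log_sum_le_sum_mul_log_add_and_eq_iff {T w g : ι → ℝ} (hT : IsPMF T)
    (hw : ∀ i, 0 ≤ w i) (hg : ∀ i, 0 < T i → 0 < w i ∧ -log (w i) ≤ g i) :
    -log (∑ i, w i) ≤ ∑ i, T i * (log (T i) + g i) ∧
      (∑ i, T i * (log (T i) + g i) = -log (∑ i, w i) ↔
        (∀ i, T i = w i / ∑ j, w j) ∧ ∀ i, 0 < T i → g i = -log (w i)) := by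
  obtain ⟨-, hle, heq⟩ := neg_log_sum_le_sum_mul_log_div_and_eq_iff hT hw
    fun i h ↦ (hg i ((hT.1 i).lt_of_ne' h)).1.ne'
  set e : ι → ℝ := fun i ↦ T i * (g i + log (w i))
  have he i : 0 ≤ e i ∧ (e i = 0 ↔ (0 < T i → g i = -log (w i))) := by
    rcases (hT.1 i).eq_or_lt with h | h
    · simp [e, ← h]
    · have := (hg i h).2
      refine ⟨mul_nonneg h.le (by linarith), ?_⟩
      simp only [e, mul_eq_zero, h.ne', false_or, h, true_implies]
      constructor <;> intro <;> linarith
  have hsplit : ∑ i, T i * (log (T i) + g i) = ∑ i, T i * log (T i / w i) + ∑ i, e i := by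
    rw [← sum_add_distrib]
    refine sum_congr rfl fun i _ ↦ ?_
    rcases (hT.1 i).eq_or_lt with h | h
    · simp [e, ← h]
    · rw [log_div h.ne' (hg i h).1.ne']
      ring
  have he0 := sum_eq_zero_iff_of_nonneg fun i (_ : i ∈ univ) ↦ (he i).1
  have hnonneg : 0 ≤ ∑ i, e i := sum_nonneg fun i _ ↦ (he i).1
  refine ⟨by linarith, ?_⟩
  rw [hsplit]
  constructor
  · intro h
    refine ⟨heq.1 (by linarith), fun i ↦ (he i).2.1 (he0.1 (by linarith) i (mem_univ i))⟩
  · rintro ⟨h1, h2⟩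
    rw [heq.2 h1, he0.2 fun i _ ↦ (he i).2.2 (h2 i), add_zero]

end Gibbs

section Objective

variable {𝓧 𝓨 : Type*} [Fintype 𝓧] [Fintype 𝓨]

/-- The `y`-section of `F_ρ`:
`F_ρ(T∘V) = ∑_y T(y) (log T(y) + condObjective ρ Q P(y|·) V(·|y))`. -/
noncomputable def condObjective (ρ : ℝ) (Q p v : 𝓧 → ℝ) : ℝ :=
  ∑ x, v x * ((1 + ρ) * log (v x / Q x) - log (p x))

lemma neg_log_rpow_le_condObjective_and_eq_iff {ρ : ℝ} (hρ : -1 < ρ) {Q p v : 𝓧 → ℝ}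
    (hv : IsPMF v) (hQ : ∀ x, 0 ≤ Q x) (hp : ∀ x, 0 ≤ p x)
    (hvQp : ∀ x, v x ≠ 0 → Q x * p x ≠ 0) :
    0 < (∑ x, Q x * p x ^ (1 / (1 + ρ))) ^ (1 + ρ) ∧
      -log ((∑ x, Q x * p x ^ (1 / (1 + ρ))) ^ (1 + ρ)) ≤ condObjective ρ Q p v ∧
      (condObjective ρ Q p v = -log ((∑ x, Q x * p x ^ (1 / (1 + ρ))) ^ (1 + ρ)) ↔
        ∀ x, v x = Q x * p x ^ (1 / (1 + ρ)) / ∑ a, Q a * p a ^ (1 / (1 + ρ))) := by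
  have h1ρ : 0 < 1 + ρ := by linarith
  set b : 𝓧 → ℝ := fun x ↦ Q x * p x ^ (1 / (1 + ρ))
  have hvb x (hx : v x ≠ 0) : b x ≠ 0 := by
    obtain ⟨hQx, hpx⟩ := mul_ne_zero_iff.1 (hvQp x hx)
    exact mul_ne_zero hQx (rpow_pos_of_pos ((hp x).lt_of_ne' hpx) _).ne'
  obtain ⟨hA, hle, heq⟩ := neg_log_sum_le_sum_mul_log_div_and_eq_iff hv
    (fun x ↦ mul_nonneg (hQ x) (rpow_nonneg (hp x) _)) hvb
  have hcond : condObjective ρ Q p v = (1 + ρ) * ∑ x, v x * log (v x / b x) := by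
    rw [condObjective, mul_sum]
    refine sum_congr rfl fun x _ ↦ ?_
    rcases eq_or_ne (v x) 0 with hx | hx
    · simp [hx]
    obtain ⟨hQx, hpx⟩ := mul_ne_zero_iff.1 (hvQp x hx)
    rw [log_div hx (hvb x hx), log_div hx hQx, log_mul hQx (hvb x hx |> right_ne_zero_of_mul),
      log_rpow ((hp x).lt_of_ne' hpx)]
    field_simp
    ring
  rw [hcond, log_rpow hA]
  refine ⟨rpow_pos_of_pos hA _, by nlinarith, ?_⟩
  rw [← heq, ← mul_neg, mul_right_inj' h1ρ.ne']

lemma neg_log_le_condObjective_neg_one_and_eq_iff {Q p v : 𝓧 → ℝ} {m : ℝ} (hv : IsPMF v)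
    (hvp : ∀ x, v x ≠ 0 → 0 < p x ∧ p x ≤ m) :
    0 < m ∧ -log m ≤ condObjective (-1) Q p v ∧
      (condObjective (-1) Q p v = -log m ↔ ∀ x, v x ≠ 0 → p x = m) := by
  obtain ⟨x₀, hx₀⟩ := hv.exists_pos
  have hm : 0 < m := (hvp x₀ hx₀.ne').1.trans_le (hvp x₀ hx₀.ne').2
  set e : 𝓧 → ℝ := fun x ↦ v x * (log m - log (p x))
  have he x : 0 ≤ e x ∧ (e x = 0 ↔ (v x ≠ 0 → p x = m)) := by
    rcases eq_or_ne (v x) 0 with hx | hx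
    · simp [e, hx]
    obtain ⟨hpx, hpm⟩ := hvp x hx
    have hlog := log_le_log hpx hpm
    refine ⟨mul_nonneg (hv.1 x) (by linarith), ?_⟩
    simp only [e, mul_eq_zero, hx, false_or, sub_eq_zero, ne_eq, not_false_eq_true, true_implies]
    exact ⟨fun h ↦ (log_injOn_pos hpx hm h.symm), fun h ↦ by rw [h]⟩
  have hsplit : condObjective (-1) Q p v = -log m + ∑ x, e x := by
    simp only [condObjective, e, mul_sub, sum_sub_distrib, ← sum_mul, hv.2]
    norm_num
    ring
  have he0 := sum_eq_zero_iff_of_nonneg fun x (_ : x ∈ univ) ↦ (he x).1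
  rw [hsplit]
  refine ⟨hm, le_add_of_nonneg_right (sum_nonneg fun x _ ↦ (he x).1), ?_⟩
  rw [add_eq_left, he0]
  exact forall_congr' fun x ↦ by simp only [mem_univ, true_implies, (he x).2]

lemma klTerm_ne_bot (s t : ℝ) : klTerm s t ≠ ⊥ := by
  unfold klTerm
  split_ifs <;> simp [-EReal.coe_mul]

lemma klTerm_eq_coe {s t : ℝ} (h : s ≠ 0 → t ≠ 0) :
    klTerm s t = ((s * log (s / t) : ℝ) : EReal) := by
  unfold klTerm
  split_ifs <;> simp_all

variable {T : 𝓨 → ℝ} {V : 𝓨 → 𝓧 → ℝ} {Q : 𝓧 → ℝ} {P : 𝓧 → 𝓨 → ℝ}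

lemma DQP_eq_coe (hfin : ∀ y x, T y * V y x ≠ 0 → Q x * P x y ≠ 0) :
    DQP T V Q P = ((∑ y, ∑ x, T y * V y x * log (T y * V y x / (Q x * P x y)) : ℝ) : EReal) := by
  simp only [DQP, EReal.coe_finset_sum, klTerm_eq_coe (hfin _ _)]

lemma DTQ_eq_coe (hsupp : ∀ y x, T y * V y x ≠ 0 → Q x ≠ 0) :
    DTQ T V Q = ((∑ y, ∑ x, T y * V y x * log (T y * V y x / (T y * Q x)) : ℝ) : EReal) := by
  simp only [DTQ, EReal.coe_finset_sum]
  exact sum_congr rfl fun y _ ↦ sum_congr rfl fun x _ ↦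
    klTerm_eq_coe fun h ↦ mul_ne_zero (left_ne_zero_of_mul h) (hsupp y x h)

lemma DQP_eq_top (h : ∃ y x, T y * V y x ≠ 0 ∧ Q x * P x y = 0) : DQP T V Q P = ⊤ := by
  classical
  obtain ⟨y, x, hTV, hQP⟩ := h
  refine EReal.finset_sum_eq_top (fun y _ ↦ EReal.finset_sum_ne_bot fun x _ ↦ klTerm_ne_bot _ _)
    (mem_univ y) (EReal.finset_sum_eq_top (fun x _ ↦ klTerm_ne_bot _ _) (mem_univ x) ?_)
  simp [klTerm, hTV, hQP]

lemma Frho_eq_top {ρ : ℝ} (hsupp : ∀ y x, Q x = 0 → V y x = 0)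
    (h : ∃ y x, T y * V y x ≠ 0 ∧ Q x * P x y = 0) : Frho ρ T V Q P = ⊤ := by
  rw [Frho, DQP_eq_top h, DTQ_eq_coe fun y x hTV hQ ↦ hTV (by simp [hsupp y x hQ]),
    ← EReal.coe_mul]
  exact EReal.top_add_of_ne_bot (EReal.coe_ne_bot _)

lemma Frho_eq_coe {ρ : ℝ} (hV : ∀ y, ∑ x, V y x = 1)
    (hfin : ∀ y x, T y * V y x ≠ 0 → Q x * P x y ≠ 0) :
    Frho ρ T V Q P =
      ((∑ y, T y * (log (T y) + condObjective ρ Q (fun x ↦ P x y) (V y)) : ℝ) : EReal) := by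
  rw [Frho, DQP_eq_coe hfin, DTQ_eq_coe fun y x h ↦ left_ne_zero_of_mul (hfin y x h),
    ← EReal.coe_mul, ← EReal.coe_add, EReal.coe_eq_coe_iff, mul_sum, ← sum_add_distrib]
  refine sum_congr rfl fun y _ ↦ ?_
  calc ∑ x, T y * V y x * log (T y * V y x / (Q x * P x y))
          + ρ * ∑ x, T y * V y x * log (T y * V y x / (T y * Q x))
      = ∑ x, T y * (V y x * log (T y) + V y x * ((1 + ρ) * log (V y x / Q x) - log (P x y))) := by
        rw [mul_sum, ← sum_add_distrib]
        refine sum_congr rfl fun x _ ↦ ?_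
        rcases eq_or_ne (T y * V y x) 0 with h | h
        · rcases mul_eq_zero.1 h with h | h <;> simp [h]
        obtain ⟨hT, hV⟩ := mul_ne_zero_iff.1 h
        obtain ⟨hQ, hP⟩ := mul_ne_zero_iff.1 (hfin y x h)
        rw [log_div h (hfin y x h), log_div h (mul_ne_zero hT hQ), log_div hV hQ, log_mul hT hV,
          log_mul hQ hP, log_mul hT hQ]
        ring
    _ = T y * (log (T y) + condObjective ρ Q (fun x ↦ P x y) (V y)) := by
        rw [← mul_sum, sum_add_distrib, ← sum_mul, hV y, one_mul, condObjective]

end Objective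

section Minimization

variable {𝓧 𝓨 : Type*} [Fintype 𝓧] [Fintype 𝓨]

/-- The normalizer of `V_ρ(·|y)`; `T_ρ(y)` is proportional to `gallagerSum ρ Q P y ^ (1 + ρ)`. -/
noncomputable def gallagerSum (ρ : ℝ) (Q : 𝓧 → ℝ) (P : 𝓧 → 𝓨 → ℝ) (y : 𝓨) : ℝ :=
  ∑ x, Q x * P x y ^ (1 / (1 + ρ))

variable {T : 𝓨 → ℝ} {V : 𝓨 → 𝓧 → ℝ} {Q : 𝓧 → ℝ} {P : 𝓧 → 𝓨 → ℝ}

lemma coe_le_Frho_and_eq_iff {ρ E : ℝ} {C : Prop} (hV : ∀ y, ∑ x, V y x = 1)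
    (hsupp : ∀ y x, Q x = 0 → V y x = 0)
    (hreal : (∀ y x, T y * V y x ≠ 0 → Q x * P x y ≠ 0) →
      E ≤ ∑ y, T y * (log (T y) + condObjective ρ Q (fun x ↦ P x y) (V y)) ∧
      (∑ y, T y * (log (T y) + condObjective ρ Q (fun x ↦ P x y) (V y)) = E ↔ C))
    (hC : C → ∀ y x, T y * V y x ≠ 0 → Q x * P x y ≠ 0) :
    (E : EReal) ≤ Frho ρ T V Q P ∧ (Frho ρ T V Q P = E ↔ C) := by
  by_cases hfin : ∀ y x, T y * V y x ≠ 0 → Q x * P x y ≠ 0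
  · rw [Frho_eq_coe hV hfin, EReal.coe_le_coe_iff, EReal.coe_eq_coe_iff]
    exact hreal hfin
  · push Not at hfin
    obtain ⟨y, x, hTV, hQP⟩ := hfin
    rw [Frho_eq_top hsupp ⟨y, x, hTV, hQP⟩]
    exact ⟨le_top, iff_of_false (EReal.coe_ne_top _).symm fun h ↦ hC h y x hTV hQP⟩

lemma gallagerSum_nonneg (hP : IsChannel P) (hQ : IsPMF Q) (ρ : ℝ) (y : 𝓨) :
    0 ≤ gallagerSum ρ Q P y :=
  sum_nonneg fun x _ ↦ mul_nonneg (hQ.1 x) (rpow_nonneg ((hP x).1 y) _)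

lemma sum_gallagerSum_rpow_pos (ρ : ℝ) (hP : IsChannel P) (hQ : IsPMF Q) :
    0 < ∑ y, gallagerSum ρ Q P y ^ (1 + ρ) := by
  obtain ⟨x, hx⟩ := hQ.exists_pos
  obtain ⟨y, hy⟩ := (hP x).exists_pos
  have hA : 0 < gallagerSum ρ Q P y :=
    (mul_pos hx (rpow_pos_of_pos hy _)).trans_le <| single_le_sum
      (f := fun a ↦ Q a * P a y ^ (1 / (1 + ρ)))
      (fun a _ ↦ mul_nonneg (hQ.1 a) (rpow_nonneg ((hP a).1 y) _)) (mem_univ x)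
  exact (rpow_pos_of_pos hA _).trans_le <|
    single_le_sum (fun y _ ↦ rpow_nonneg (gallagerSum_nonneg hP hQ ρ y) _) (mem_univ y)

lemma mul_eq_Jrho_iff {ρ : ℝ} (hρ : -1 < ρ) (hP : IsChannel P) (hQ : IsPMF Q)
    (hV : ∀ y, ∑ x, V y x = 1) :
    (∀ x y, T y * V y x = Jrho ρ Q P x y) ↔
      (∀ y, T y = gallagerSum ρ Q P y ^ (1 + ρ) / ∑ y', gallagerSum ρ Q P y' ^ (1 + ρ)) ∧
      ∀ y, 0 < T y → ∀ x, V y x = Q x * P x y ^ (1 / (1 + ρ)) / gallagerSum ρ Q P y := by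
  set A := gallagerSum ρ Q P
  set Z := ∑ y', A y' ^ (1 + ρ)
  have hZ : 0 < Z := sum_gallagerSum_rpow_pos ρ hP hQ
  have hJ x y : Jrho ρ Q P x y = Q x * P x y ^ (1 / (1 + ρ)) * A y ^ ρ / Z := rfl
  have hAA y : A y ^ (1 + ρ) = A y * A y ^ ρ :=
    rpow_one_add' (gallagerSum_nonneg hP hQ ρ y) (by linarith)
  have hApos {y} (h : A y ≠ 0) : 0 < A y := (gallagerSum_nonneg hP hQ ρ y).lt_of_ne' h
  constructor
  · intro h
    have hT y : T y = A y ^ (1 + ρ) / Z := by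
      calc T y = ∑ x, T y * V y x := by rw [← mul_sum, hV y, mul_one]
        _ = A y ^ (1 + ρ) / Z := by simp only [h, hJ, ← sum_div, ← sum_mul, hAA]; rfl
    refine ⟨hT, fun y hTy x ↦ ?_⟩
    have hA : A y ≠ 0 := by
      rintro h0
      rw [hT y, hAA, h0, zero_mul, zero_div] at hTy
      exact hTy.false
    have hxy := h x y
    rw [hT y, hJ, hAA] at hxy
    field_simp at hxy ⊢
    exact mul_right_cancel₀ (rpow_pos_of_pos (hApos hA) ρ).ne' (by linarith)
  · rintro ⟨hT, hVT⟩ x y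
    by_cases hA : A y = 0
    · have hb : Q x * P x y ^ (1 / (1 + ρ)) = 0 := (sum_eq_zero_iff_of_nonneg fun a _ ↦
        mul_nonneg (hQ.1 a) (rpow_nonneg ((hP a).1 y) _)).1 hA x (mem_univ x)
      rw [hT y, hJ, hAA, hA, hb]
      simp
    · have hTy : 0 < T y := by rw [hT y, hAA]; have := hApos hA; positivity
      rw [hVT y hTy x, hT y, hJ, hAA]
      field_simp

lemma exists_mul_eq_Jrho {ρ : ℝ} (hρ : -1 < ρ) (hP : IsChannel P) (hQ : IsPMF Q) :
    ∃ T : 𝓨 → ℝ, ∃ V : 𝓨 → 𝓧 → ℝ, IsPMF T ∧ IsCondPMF V ∧ (∀ y x, Q x = 0 → V y x = 0) ∧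
      ∀ x y, T y * V y x = Jrho ρ Q P x y := by
  classical
  set A := gallagerSum ρ Q P
  have hZ := sum_gallagerSum_rpow_pos ρ hP hQ
  set V : 𝓨 → 𝓧 → ℝ := fun y x ↦ if A y = 0 then Q x else Q x * P x y ^ (1 / (1 + ρ)) / A y
  have hV : IsCondPMF V := fun y ↦ by
    by_cases hA : A y = 0
    · simpa [V, hA] using hQ
    · refine ⟨fun x ↦ ?_, ?_⟩ <;> simp only [V, hA, if_false]
      · exact div_nonneg (mul_nonneg (hQ.1 x) (rpow_nonneg ((hP x).1 y) _))
          (gallagerSum_nonneg hP hQ ρ y)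
      · rw [← sum_div]
        exact div_self hA
  refine ⟨fun y ↦ A y ^ (1 + ρ) / ∑ y', A y' ^ (1 + ρ), V,
    ⟨fun y ↦ div_nonneg (rpow_nonneg (gallagerSum_nonneg hP hQ ρ y) _) hZ.le,
      by rw [← sum_div, div_self hZ.ne']⟩, hV, fun y x hQx ↦ by simp [V, hQx],
    (mul_eq_Jrho_iff hρ hP hQ fun y ↦ (hV y).2).2 ⟨fun y ↦ rfl, fun y hTy x ↦ ?_⟩⟩
  have hA : A y ≠ 0 := by
    rintro h0
    simp [h0, zero_rpow (by linarith : 1 + ρ ≠ 0)] at hTy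
  exact if_neg hA

theorem E0_le_Frho_and_eq_iff {ρ : ℝ} (hρ : -1 < ρ) (hP : IsChannel P) (hQ : IsPMF Q)
    (hT : IsPMF T) (hV : IsCondPMF V) (hsupp : ∀ y x, Q x = 0 → V y x = 0) :
    (E0 ρ Q P : EReal) ≤ Frho ρ T V Q P ∧
      (Frho ρ T V Q P = E0 ρ Q P ↔ ∀ x y, T y * V y x = Jrho ρ Q P x y) := by
  refine coe_le_Frho_and_eq_iff (fun y ↦ (hV y).2) hsupp (fun hfin ↦ ?_) fun hJ y x hTV hQP ↦ ?_
  · have hcond y (hTy : 0 < T y) := neg_log_rpow_le_condObjective_and_eq_iff hρ (hV y) hQ.1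
      (fun x ↦ (hP x).1 y) fun x hx ↦ hfin y x (mul_ne_zero hTy.ne' hx)
    obtain ⟨hle, heq⟩ := neg_log_sum_le_sum_mul_log_add_and_eq_iff hT
      (fun y ↦ rpow_nonneg (gallagerSum_nonneg hP hQ ρ y) _)
      fun y hTy ↦ ⟨(hcond y hTy).1, (hcond y hTy).2.1⟩
    refine ⟨hle, heq.trans ?_⟩
    rw [mul_eq_Jrho_iff hρ hP hQ fun y ↦ (hV y).2]
    exact and_congr_right fun _ ↦ forall₂_congr fun y hTy ↦ (hcond y hTy).2.2
  · -- `T_ρ∘V_ρ` vanishes wherever `Q∘P` does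
    have hb : Q x * P x y ^ (1 / (1 + ρ)) = 0 := by
      rcases mul_eq_zero.1 hQP with h | h
      · simp [h]
      · rw [h, zero_rpow (one_div_ne_zero (by linarith)), mul_zero]
    exact hTV (by rw [hJ, Jrho, hb, zero_mul, zero_div])

end Minimization

section NegOne

lemma le_maxP {𝓧 𝓨 : Type*} [Finite 𝓧] {Q : 𝓧 → ℝ} {P : 𝓧 → 𝓨 → ℝ} {x : 𝓧} (hx : 0 < Q x)
    (y : 𝓨) : P x y ≤ maxP Q P y :=
  le_ciSup (f := fun a : {a // 0 < Q a} ↦ P a.1 y) (Set.finite_range _).bddAbove ⟨x, hx⟩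

lemma exists_eq_maxP {𝓧 𝓨 : Type*} [Finite 𝓧] {Q : 𝓧 → ℝ} {P : 𝓧 → 𝓨 → ℝ}
    (hQ : ∃ x, 0 < Q x) (y : 𝓨) : ∃ x, 0 < Q x ∧ P x y = maxP Q P y := by
  obtain ⟨x₀, hx₀⟩ := hQ
  have : Nonempty {a // 0 < Q a} := ⟨⟨x₀, hx₀⟩⟩
  obtain ⟨x, hx⟩ := exists_eq_ciSup_of_finite (f := fun a : {a // 0 < Q a} ↦ P a.1 y)
  exact ⟨x.1, x.2, hx⟩

variable {𝓧 𝓨 : Type*} [Fintype 𝓧] [Fintype 𝓨]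
  {T : 𝓨 → ℝ} {V : 𝓨 → 𝓧 → ℝ} {Q : 𝓧 → ℝ} {P : 𝓧 → 𝓨 → ℝ}

lemma maxP_nonneg (hP : IsChannel P) (hQ : IsPMF Q) (y : 𝓨) : 0 ≤ maxP Q P y := by
  obtain ⟨x, hx⟩ := hQ.exists_pos
  exact ((hP x).1 y).trans (le_maxP hx y)

lemma sum_maxP_pos (hP : IsChannel P) (hQ : IsPMF Q) : 0 < ∑ y, maxP Q P y := by
  obtain ⟨x, hx⟩ := hQ.exists_pos
  obtain ⟨y, hy⟩ := (hP x).exists_pos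
  exact (hy.trans_le (le_maxP hx y)).trans_le
    (single_le_sum (fun y _ ↦ maxP_nonneg hP hQ y) (mem_univ y))

lemma isPMF_Tm1 (hP : IsChannel P) (hQ : IsPMF Q) : IsPMF (Tm1 Q P) :=
  ⟨fun y ↦ div_nonneg (maxP_nonneg hP hQ y) (sum_maxP_pos hP hQ).le,
    by simp only [Tm1]; rw [← sum_div, div_self (sum_maxP_pos hP hQ).ne']⟩

lemma admissibleAtM1_iff :
    AdmissibleAtM1 Q P V ↔ ∀ y x, V y x ≠ 0 → 0 < Q x ∧ P x y = maxP Q P y := by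
  refine forall₂_congr fun y x ↦ ?_
  rw [not_imp_comm]
  refine imp_congr_right fun _ ↦ and_congr_right fun hx ↦ ?_
  have : Nonempty {a // 0 < Q a} := ⟨⟨x, hx⟩⟩
  exact ⟨fun h ↦ le_antisymm (le_maxP hx y) (ciSup_le fun a ↦ h a.1 a.2),
    fun h a ha ↦ h ▸ le_maxP ha y⟩

lemma AdmissibleAtM1.eq_zero_of_eq_zero (hadm : AdmissibleAtM1 Q P V) :
    ∀ y x, Q x = 0 → V y x = 0 :=
  fun y x hQx ↦ hadm y x fun h ↦ h.1.ne' hQx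

lemma exists_admissibleAtM1 (hQ : IsPMF Q) (P : 𝓧 → 𝓨 → ℝ) :
    ∃ V : 𝓨 → 𝓧 → ℝ, IsCondPMF V ∧ AdmissibleAtM1 Q P V := by
  classical
  choose x hx using exists_eq_maxP (P := P) hQ.exists_pos
  refine ⟨fun y a ↦ if a = x y then 1 else 0,
    fun y ↦ ⟨fun a ↦ by dsimp only; split_ifs <;> norm_num, by simp⟩,
    admissibleAtM1_iff.2 fun y a ha ↦ ?_⟩
  obtain rfl : a = x y := by
    by_contra h
    simp [h] at ha
  exact hx y

theorem E0m1_le_Frho_and_eq_iff (hP : IsChannel P) (hQ : IsPMF Q) (hT : IsPMF T)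
    (hV : IsCondPMF V) (hsupp : ∀ y x, Q x = 0 → V y x = 0) :
    (E0m1 Q P : EReal) ≤ Frho (-1) T V Q P ∧
      (Frho (-1) T V Q P = E0m1 Q P ↔
        (∀ y, T y = Tm1 Q P y) ∧ ∀ y x, T y * V y x ≠ 0 → P x y = maxP Q P y) := by
  refine coe_le_Frho_and_eq_iff (fun y ↦ (hV y).2) hsupp (fun hfin ↦ ?_)
    fun ⟨hTm1, hmax⟩ y x hTV hQP ↦ ?_
  · have hcond y (hTy : 0 < T y) :=
      neg_log_le_condObjective_neg_one_and_eq_iff (Q := Q) (m := maxP Q P y) (hV y) fun x hx ↦ by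
        obtain ⟨hQx, hPx⟩ := mul_ne_zero_iff.1 (hfin y x (mul_ne_zero hTy.ne' hx))
        exact ⟨((hP x).1 y).lt_of_ne' hPx, le_maxP ((hQ.1 x).lt_of_ne' hQx) y⟩
    obtain ⟨hle, heq⟩ := neg_log_sum_le_sum_mul_log_add_and_eq_iff hT (maxP_nonneg hP hQ)
      fun y hTy ↦ ⟨(hcond y hTy).1, (hcond y hTy).2.1⟩
    refine ⟨hle, heq.trans (and_congr Iff.rfl ⟨fun h y x hTV ↦ ?_, fun h y hTy ↦ ?_⟩)⟩
    · have hTy := (hT.1 y).lt_of_ne' (left_ne_zero_of_mul hTV)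
      exact (hcond y hTy).2.2.1 (h y hTy) x (right_ne_zero_of_mul hTV)
    · exact (hcond y hTy).2.2.2 fun x hx ↦ h y x (mul_ne_zero hTy.ne' hx)
  · -- `P(y|x) = 0` would force `maxP Q P y = 0`, hence `T y = T_{-1}(y) = 0`
    rcases mul_eq_zero.1 hQP with h | h
    · exact right_ne_zero_of_mul hTV (hsupp y x h)
    · exact left_ne_zero_of_mul hTV (by rw [hTm1 y, Tm1, ← hmax y x hTV, h, zero_div])

lemma Frho_Tm1_eq_E0m1 (hP : IsChannel P) (hQ : IsPMF Q) (hV : IsCondPMF V)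
    (hadm : AdmissibleAtM1 Q P V) : Frho (-1) (Tm1 Q P) V Q P = E0m1 Q P :=
  (E0m1_le_Frho_and_eq_iff hP hQ (isPMF_Tm1 hP hQ) hV hadm.eq_zero_of_eq_zero).2.2
    ⟨fun _ ↦ rfl, fun y x h ↦ (admissibleAtM1_iff.1 hadm y x (right_ne_zero_of_mul h)).2⟩

lemma exists_admissibleAtM1_of_Frho_eq_E0m1 (hP : IsChannel P) (hQ : IsPMF Q) (hT : IsPMF T)
    (hV : IsCondPMF V) (hsupp : ∀ y x, Q x = 0 → V y x = 0)
    (h : Frho (-1) T V Q P = E0m1 Q P) :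
    ∃ V' : 𝓨 → 𝓧 → ℝ, IsCondPMF V' ∧ AdmissibleAtM1 Q P V' ∧
      ∀ x y, T y * V y x = Tm1 Q P y * V' y x := by
  classical
  obtain ⟨hTm1, hmax⟩ := (E0m1_le_Frho_and_eq_iff hP hQ hT hV hsupp).2.1 h
  obtain ⟨W, hW, hWadm⟩ := exists_admissibleAtM1 hQ P
  rw [admissibleAtM1_iff] at hWadm
  refine ⟨fun y ↦ if T y = 0 then W y else V y, fun y ↦ ?_,
    admissibleAtM1_iff.2 fun y x hx ↦ ?_, fun x y ↦ ?_⟩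
  · dsimp only
    split_ifs
    exacts [hW y, hV y]
  · split_ifs at hx with hTy
    · exact hWadm y x hx
    · exact ⟨(hQ.1 x).lt_of_ne' fun hQx ↦ hx (hsupp y x hQx), hmax y x (mul_ne_zero hTy hx)⟩
  · dsimp only
    split_ifs with hTy
    · rw [← hTm1 y, hTy, zero_mul, zero_mul]
    · rw [hTm1 y]

end NegOne

section Limit

lemma tendsto_sum_mul_rpow_one_div_rpow {ι : Type*} [Fintype ι] {q p : ι → ℝ} {m : ℝ}
    (hq : ∀ i, 0 ≤ q i) (hp : ∀ i, 0 ≤ p i) (hpm : ∀ i, 0 < q i → p i ≤ m)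
    (hm : ∃ i, 0 < q i ∧ p i = m) :
    Tendsto (fun t : ℝ ↦ (∑ i, q i * p i ^ (1 / t)) ^ t) (𝓝[>] 0) (𝓝 m) := by
  obtain ⟨i, hqi, rfl⟩ := hm
  have hS : 0 < ∑ j, q j := hqi.trans_le (single_le_sum (fun j _ ↦ hq j) (mem_univ i))
  have hlim {a : ℝ} (ha : 0 < a) : Tendsto (fun t : ℝ ↦ a ^ t * p i) (𝓝[>] 0) (𝓝 (p i)) := by
    simpa using ((continuousAt_const_rpow (b := 0) ha.ne').tendsto.mul_const (p i)).mono_left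
      (nhdsWithin_le_nhds (s := Set.Ioi 0))
  -- squeeze between `q(i)^t p(i)` and `(∑ q)^t p(i)`, both of which tend to `p(i)`
  refine tendsto_of_tendsto_of_tendsto_of_le_of_le' (hlim hqi) (hlim hS) ?_ ?_ <;>
    filter_upwards [self_mem_nhdsWithin] with t (ht : 0 < t)
  · calc q i ^ t * p i = (q i * p i ^ (1 / t)) ^ t := by
          rw [mul_rpow hqi.le (rpow_nonneg (hp i) _), one_div, rpow_inv_rpow (hp i) ht.ne']
      _ ≤ (∑ j, q j * p j ^ (1 / t)) ^ t := by
          refine rpow_le_rpow (mul_nonneg hqi.le (rpow_nonneg (hp i) _)) ?_ ht.le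
          exact single_le_sum (f := fun j ↦ q j * p j ^ (1 / t))
            (fun j _ ↦ mul_nonneg (hq j) (rpow_nonneg (hp j) _)) (mem_univ i)
  · calc (∑ j, q j * p j ^ (1 / t)) ^ t ≤ (∑ j, q j * p i ^ (1 / t)) ^ t := by
          refine rpow_le_rpow (sum_nonneg fun j _ ↦ mul_nonneg (hq j) (rpow_nonneg (hp j) _))
            (sum_le_sum fun j _ ↦ ?_) ht.le
          rcases (hq j).eq_or_lt with h | h
          · simp [← h]
          · gcongr
            exacts [hp j, hpm j h]
      _ = (∑ j, q j) ^ t * p i := by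
          rw [← sum_mul, mul_rpow hS.le (rpow_nonneg (hp i) _), one_div,
            rpow_inv_rpow (hp i) ht.ne']

theorem tendsto_E0_E0m1 {𝓧 𝓨 : Type*} [Fintype 𝓧] [Fintype 𝓨] {Q : 𝓧 → ℝ}
    {P : 𝓧 → 𝓨 → ℝ} (hP : IsChannel P) (hQ : IsPMF Q) :
    Tendsto (fun r : ℝ ↦ E0 r Q P) (𝓝[>] (-1)) (𝓝 (E0m1 Q P)) := by
  have hshift : Tendsto (fun r : ℝ ↦ 1 + r) (𝓝[>] (-1)) (𝓝[>] 0) := by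
    refine tendsto_nhdsWithin_of_tendsto_nhds_of_eventually_within _ ?_ ?_
    · exact ((continuous_const.add continuous_id).tendsto' (-1) 0 (by norm_num)).mono_left
        nhdsWithin_le_nhds
    · filter_upwards [self_mem_nhdsWithin] with r (hr : -1 < r)
      exact neg_lt_iff_pos_add'.1 hr
  have hsum := tendsto_finsetSum univ fun y _ ↦
    (tendsto_sum_mul_rpow_one_div_rpow hQ.1 (fun x ↦ (hP x).1 y) (fun x hx ↦ le_maxP hx y)
      (exists_eq_maxP hQ.exists_pos y)).comp hshift
  exact ((continuousAt_log (sum_maxP_pos hP hQ).ne').tendsto.comp hsum).neg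

end Limit

theorem stmt_7_general {𝓧 𝓨 : Type*} [Fintype 𝓧] [Fintype 𝓨]
    (P : 𝓧 → 𝓨 → ℝ) (hP : IsChannel P) (Q : 𝓧 → ℝ) (hQ : IsPMF Q)
    (ρ : ℝ) (hρ : -1 ≤ ρ) :
    Tendsto (fun r : ℝ => E0 r Q P) (𝓝[>] (-1 : ℝ)) (𝓝 (E0m1 Q P))
    ∧ sInf {v | ∃ T : 𝓨 → ℝ, ∃ V : 𝓨 → 𝓧 → ℝ, IsPMF T ∧ IsCondPMF V ∧
          (∀ y x, Q x = 0 → V y x = 0) ∧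
          v = DQP T V Q P + (ρ : EReal) * DTQ T V Q}
        = ((E0full ρ Q P : ℝ) : EReal)
    ∧ (-1 < ρ →
        (∃ T : 𝓨 → ℝ, ∃ V : 𝓨 → 𝓧 → ℝ, IsPMF T ∧ IsCondPMF V ∧
          (∀ y x, Q x = 0 → V y x = 0) ∧
          DQP T V Q P + (ρ : EReal) * DTQ T V Q = ((E0 ρ Q P : ℝ) : EReal) ∧
          ∀ x y, T y * V y x = Jrho ρ Q P x y)
        ∧ ∀ (T : 𝓨 → ℝ) (V : 𝓨 → 𝓧 → ℝ), IsPMF T → IsCondPMF V →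
            (∀ y x, Q x = 0 → V y x = 0) →
            DQP T V Q P + (ρ : EReal) * DTQ T V Q = ((E0 ρ Q P : ℝ) : EReal) →
            ∀ x y, T y * V y x = Jrho ρ Q P x y)
    ∧ (ρ = -1 →
        (∀ (T : 𝓨 → ℝ) (V : 𝓨 → 𝓧 → ℝ), IsPMF T → IsCondPMF V →
            (∀ y x, Q x = 0 → V y x = 0) →
            DQP T V Q P + (ρ : EReal) * DTQ T V Q = ((E0m1 Q P : ℝ) : EReal) →
            ∃ V' : 𝓨 → 𝓧 → ℝ, IsCondPMF V' ∧ AdmissibleAtM1 Q P V' ∧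
              ∀ x y, T y * V y x = Tm1 Q P y * V' y x)
        ∧ ∀ V' : 𝓨 → 𝓧 → ℝ, IsCondPMF V' → AdmissibleAtM1 Q P V' →
            DQP (Tm1 Q P) V' Q P + (ρ : EReal) * DTQ (Tm1 Q P) V' Q
              = ((E0m1 Q P : ℝ) : EReal)) := by
  refine ⟨tendsto_E0_E0m1 hP hQ, ?_, fun hρ' ↦ ?_, fun hρ' ↦ ?_⟩
  · rcases hρ.eq_or_lt with rfl | hρ'
    · rw [E0full, if_pos rfl]
      obtain ⟨V, hV, hadm⟩ := exists_admissibleAtM1 hQ P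
      refine IsLeast.csInf_eq ⟨⟨Tm1 Q P, V, isPMF_Tm1 hP hQ, hV, hadm.eq_zero_of_eq_zero,
        (Frho_Tm1_eq_E0m1 hP hQ hV hadm).symm⟩, ?_⟩
      rintro _ ⟨T, V, hT, hV, hsupp, rfl⟩
      exact (E0m1_le_Frho_and_eq_iff hP hQ hT hV hsupp).1
    · rw [E0full, if_neg hρ'.ne']
      obtain ⟨T, V, hT, hV, hsupp, hJ⟩ := exists_mul_eq_Jrho hρ' hP hQ
      refine IsLeast.csInf_eq ⟨⟨T, V, hT, hV, hsupp,
        ((E0_le_Frho_and_eq_iff hρ' hP hQ hT hV hsupp).2.2 hJ).symm⟩, ?_⟩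
      rintro _ ⟨T, V, hT, hV, hsupp, rfl⟩
      exact (E0_le_Frho_and_eq_iff hρ' hP hQ hT hV hsupp).1
  · obtain ⟨T, V, hT, hV, hsupp, hJ⟩ := exists_mul_eq_Jrho hρ' hP hQ
    exact ⟨⟨T, V, hT, hV, hsupp, (E0_le_Frho_and_eq_iff hρ' hP hQ hT hV hsupp).2.2 hJ, hJ⟩,
      fun T V hT hV hsupp ↦ (E0_le_Frho_and_eq_iff hρ' hP hQ hT hV hsupp).2.1⟩
  · subst hρ'
    exact ⟨fun T V ↦ exists_admissibleAtM1_of_Frho_eq_E0m1 hP hQ,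
      fun V hV hadm ↦ Frho_Tm1_eq_E0m1 hP hQ hV hadm⟩

theorem stmt_7 {𝓧 𝓨 : Type*} [Fintype 𝓧] [Fintype 𝓨] [Nonempty 𝓧] [Nonempty 𝓨]
    (P : 𝓧 → 𝓨 → ℝ) (hP : IsChannel P) (Q : 𝓧 → ℝ) (hQ : IsPMF Q)
    (ρ : ℝ) (hρ : -1 ≤ ρ) :
    Tendsto (fun r : ℝ => E0 r Q P) (𝓝[>] (-1 : ℝ)) (𝓝 (E0m1 Q P))
    ∧ sInf {v | ∃ T : 𝓨 → ℝ, ∃ V : 𝓨 → 𝓧 → ℝ, IsPMF T ∧ IsCondPMF V ∧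
          (∀ y x, Q x = 0 → V y x = 0) ∧
          v = DQP T V Q P + (ρ : EReal) * DTQ T V Q}
        = ((E0full ρ Q P : ℝ) : EReal)
    ∧ (-1 < ρ →
        (∃ T : 𝓨 → ℝ, ∃ V : 𝓨 → 𝓧 → ℝ, IsPMF T ∧ IsCondPMF V ∧
          (∀ y x, Q x = 0 → V y x = 0) ∧
          DQP T V Q P + (ρ : EReal) * DTQ T V Q = ((E0 ρ Q P : ℝ) : EReal) ∧
          ∀ x y, T y * V y x = Jrho ρ Q P x y)
        ∧ ∀ (T : 𝓨 → ℝ) (V : 𝓨 → 𝓧 → ℝ), IsPMF T → IsCondPMF V →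
            (∀ y x, Q x = 0 → V y x = 0) →
            DQP T V Q P + (ρ : EReal) * DTQ T V Q = ((E0 ρ Q P : ℝ) : EReal) →
            ∀ x y, T y * V y x = Jrho ρ Q P x y)
    ∧ (ρ = -1 →
        (∀ (T : 𝓨 → ℝ) (V : 𝓨 → 𝓧 → ℝ), IsPMF T → IsCondPMF V →
            (∀ y x, Q x = 0 → V y x = 0) →
            DQP T V Q P + (ρ : EReal) * DTQ T V Q = ((E0m1 Q P : ℝ) : EReal) →
            ∃ V' : 𝓨 → 𝓧 → ℝ, IsCondPMF V' ∧ AdmissibleAtM1 Q P V' ∧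
              ∀ x y, T y * V y x = Tm1 Q P y * V' y x)
        ∧ ∀ V' : 𝓨 → 𝓧 → ℝ, IsCondPMF V' → AdmissibleAtM1 Q P V' →
            DQP (Tm1 Q P) V' Q P + (ρ : EReal) * DTQ (Tm1 Q P) V' Q
              = ((E0m1 Q P : ℝ) : EReal)) :=
  stmt_7_general P hP Q hQ ρ hρ
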